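/- The generating function for stacks satisfies 1 + ∑_{m ≥ 1} q^m/((q;q)_{m-1}² (1-q^m)) = ((q;q)_∞)^{-2} · L(q) + 1, i.e., ∑_{m ≥ 1} q^m/((q;q)_{m-1}²(1-q^m)) = ((q;q)_∞)^{-2} ∑_{n ≥ 1} (-1)^{n-1} q^{n(n+1)/2}, as formal power series. -/

import Mathlib

open PowerSeries

/-- The q-Pochhammer symbol `(q;q)_m = ∏_{j=1}^m (1 - q^j)`. -/
noncomputable def qPoch (m : ℕ) : PowerSeries ℚ :=
  ∏ j ∈ Finset.range m, (1 - PowerSeries.X ^ (j + 1))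

/-- The infinite product `(q;q)_∞`, defined coefficientwise. -/
noncomputable def qPochInf : PowerSeries ℚ :=
  PowerSeries.mk fun n => PowerSeries.coeff n (qPoch (n + 1))

/-- The formal sum `∑_{m ≥ 0} F m` of a family of power series in which the `m`-th
term has order at least `m`, defined coefficientwise. -/
noncomputable def formalSum (F : ℕ → PowerSeries ℚ) : PowerSeries ℚ :=
  PowerSeries.mk fun n => ∑ m ∈ Finset.range (n + 1), PowerSeries.coeff n (F m)

/-!
Multiplied by `(q;q)_∞²`, the `m`-th summand becomes `q^m (q^m;q)_∞ (q^{m+1};q)_∞`; since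
`(q^m;q)_∞ = (1 - q^m)(q^{m+1};q)_∞` these telescope against `q^m (q^{m+1};q)_∞²`, so the
left side times `(q;q)_∞²` is `1 - ∑_{m ≥ 0} q^m (q^{m+1};q)_∞²`. To evaluate the last sum, expand
one factor by Euler's identity `(z;q)_∞ = ∑_k (-1)^k q^{k(k-1)/2} z^k/(q;q)_k` at `z = q^{m+1}`
and sum over `m` first: `S(z) = ∑_m z^m (q^{m+1};q)_∞` satisfies `S(q) = 1` and
`S(zq) = (1 - z) S(z)`, so `S(q^{k+1}) = (q;q)_k`, which cancels Euler's denominator and leaves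
`∑_k (-1)^k q^{k(k+1)/2}`. Every identity is proved modulo `q^{n+1}`, where all infinite products
are replaced by finite ones.
-/

open Finset

section Congruence

variable {R : Type*} [CommRing R] {N : ℕ} {f g : R⟦X⟧}

theorem smodEq_X_pow_iff :
    f ≡ g [SMOD Ideal.span {(X : R⟦X⟧) ^ N}] ↔ ∀ i < N, coeff i f = coeff i g := by
  simp only [SModEq.sub_mem, Ideal.mem_span_singleton, X_pow_dvd_iff, map_sub, sub_eq_zero]

theorem smodEq_zero_of_X_pow_dvd (h : X ^ N ∣ f) : f ≡ 0 [SMOD Ideal.span {(X : R⟦X⟧) ^ N}] :=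
  SModEq.zero.2 (Ideal.mem_span_singleton.2 h)

theorem constantCoeff_one_sub_X_pow {k : ℕ} (hk : k ≠ 0) :
    constantCoeff (1 - X ^ k : R⟦X⟧) = 1 := by
  simp [zero_pow hk]

end Congruence

theorem formalSum_smodEq_sum_range {F : ℕ → ℚ⟦X⟧} (hF : ∀ k, X ^ (k + 1) ∣ F k) (N : ℕ) :
    formalSum F ≡ ∑ k ∈ range N, F k [SMOD Ideal.span {(X : ℚ⟦X⟧) ^ (N + 1)}] := by
  refine smodEq_X_pow_iff.2 fun i hi => ?_
  have hsum : ∀ M, i ≤ M → ∑ k ∈ range M, coeff i (F k) = ∑ k ∈ range i, coeff i (F k) :=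
    fun M hM => (sum_subset (range_subset_range.2 hM) fun k _ hk =>
      X_pow_dvd_iff.1 (hF k) i (by simp at hk; omega)).symm
  rw [formalSum, coeff_mk, map_sum, hsum _ i.le_succ, hsum N (by omega)]

theorem qPoch_succ (k : ℕ) : qPoch (k + 1) = qPoch k * (1 - X ^ (k + 1)) :=
  prod_range_succ _ _

theorem constantCoeff_qPoch (k : ℕ) : constantCoeff (qPoch k) = 1 := by
  simp only [qPoch, map_prod, constantCoeff_one_sub_X_pow (Nat.succ_ne_zero _), prod_const_one]

theorem qPoch_mul_inv_cancel (k : ℕ) : qPoch k * (qPoch k)⁻¹ = 1 :=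
  PowerSeries.mul_inv_cancel _ (by simp [constantCoeff_qPoch])

theorem qPoch_smodEq_of_le {m n : ℕ} (h : m ≤ n) :
    qPoch n ≡ qPoch m [SMOD Ideal.span {(X : ℚ⟦X⟧) ^ (m + 1)}] := by
  induction n, h using Nat.le_induction with
  | base => rfl
  | succ n hmn ih =>
    have hX : (X : ℚ⟦X⟧) ^ (n + 1) ≡ 0 [SMOD Ideal.span {X ^ (m + 1)}] :=
      smodEq_zero_of_X_pow_dvd (pow_dvd_pow X (by omega))
    simpa [qPoch_succ] using ih.mul ((SModEq.refl 1).sub hX)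

theorem qPochInf_smodEq (n : ℕ) :
    qPochInf ≡ qPoch n [SMOD Ideal.span {(X : ℚ⟦X⟧) ^ (n + 1)}] := by
  refine smodEq_X_pow_iff.2 fun i hi => ?_
  rw [qPochInf, coeff_mk, smodEq_X_pow_iff.1 (qPoch_smodEq_of_le i.le_succ) i i.lt_succ_self,
    smodEq_X_pow_iff.1 (qPoch_smodEq_of_le (by omega : i ≤ n)) i i.lt_succ_self]

theorem constantCoeff_qPochInf : constantCoeff qPochInf = 1 := by
  rw [← coeff_zero_eq_constantCoeff_apply, smodEq_X_pow_iff.1 (qPochInf_smodEq 0) 0 one_pos,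
    coeff_zero_eq_constantCoeff_apply, constantCoeff_qPoch]

-- `(q^{m+1};q)_{n-m}`, which agrees with `(q^{m+1};q)_∞` modulo `q^{n+1}`.
noncomputable def qPochIoc (m n : ℕ) : ℚ⟦X⟧ :=
  ∏ j ∈ Ioc m n, (1 - X ^ j)

theorem qPochIoc_of_le {m n : ℕ} (h : n ≤ m) : qPochIoc m n = 1 := by
  rw [qPochIoc, Ioc_eq_empty (by omega), prod_empty]

theorem qPochIoc_eq_mul {m n : ℕ} (h : m < n) :
    qPochIoc m n = (1 - X ^ (m + 1)) * qPochIoc (m + 1) n := by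
  rw [qPochIoc, ← prod_Ioc_consecutive _ m.le_succ h, Nat.Ioc_succ_singleton, prod_singleton,
    qPochIoc]

theorem qPoch_eq_qPochIoc_zero (n : ℕ) : qPoch n = qPochIoc 0 n := by
  induction n with
  | zero => rfl
  | succ n ih => rw [qPoch_succ, ih, qPochIoc, qPochIoc, prod_Ioc_succ_top n.zero_le]

theorem qPoch_mul_qPochIoc {m n : ℕ} (h : m ≤ n) : qPoch m * qPochIoc m n = qPoch n := by
  rw [qPoch_eq_qPochIoc_zero, qPoch_eq_qPochIoc_zero, qPochIoc, qPochIoc, qPochIoc,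
    prod_Ioc_consecutive _ m.zero_le h]

-- Truncation of Euler's expansion `(z;q)_∞ = ∑_k (-1)^k q^(k choose 2) z^k / (q;q)_k`.
noncomputable def eulerTerm (k : ℕ) (z : ℚ⟦X⟧) : ℚ⟦X⟧ :=
  (-1) ^ k * X ^ k.choose 2 * z ^ k * (qPoch k)⁻¹

noncomputable def eulerSum (n : ℕ) (z : ℚ⟦X⟧) : ℚ⟦X⟧ :=
  ∑ k ∈ range (n + 1), eulerTerm k z

theorem eulerTerm_zero (z : ℚ⟦X⟧) : eulerTerm 0 z = 1 := by
  simp [eulerTerm, qPoch]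

theorem eulerTerm_succ_sub (k : ℕ) (z : ℚ⟦X⟧) :
    eulerTerm (k + 1) z - eulerTerm (k + 1) (z * X) = -(z * eulerTerm k (z * X)) := by
  have hinv : (qPoch k)⁻¹ = (1 - X ^ (k + 1)) * (qPoch (k + 1))⁻¹ := by
    have h := qPoch_mul_inv_cancel (k + 1)
    nth_rewrite 1 [qPoch_succ] at h
    linear_combination (1 - X ^ (k + 1)) * (qPoch (k + 1))⁻¹ * qPoch_mul_inv_cancel k
      - (qPoch k)⁻¹ * h
  rw [eulerTerm, eulerTerm, eulerTerm, hinv, Nat.choose_succ_succ', Nat.choose_one_right]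
  ring

theorem eulerSum_eq_one_sub_mul_add (n : ℕ) (z : ℚ⟦X⟧) :
    eulerSum n z = (1 - z) * eulerSum n (z * X) + z * eulerTerm n (z * X) := by
  have hdiff : eulerSum n z - eulerSum n (z * X) = -(z * ∑ k ∈ range n, eulerTerm k (z * X)) := by
    rw [eulerSum, eulerSum, ← sum_sub_distrib, sum_range_succ', eulerTerm_zero, eulerTerm_zero,
      sub_self, add_zero, sum_congr rfl fun k _ => eulerTerm_succ_sub k z, sum_neg_distrib,
      mul_sum]
  have hlast : eulerSum n (z * X) = ∑ k ∈ range n, eulerTerm k (z * X) + eulerTerm n (z * X) :=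
    sum_range_succ _ _
  linear_combination hdiff + z * hlast

theorem eulerSum_smodEq_one {n : ℕ} {z : ℚ⟦X⟧} (hz : X ^ (n + 1) ∣ z) :
    eulerSum n z ≡ 1 [SMOD Ideal.span {(X : ℚ⟦X⟧) ^ (n + 1)}] := by
  have hterm : ∀ k ∈ range n, eulerTerm (k + 1) z ≡ 0 [SMOD Ideal.span {X ^ (n + 1)}] :=
    fun k _ => smodEq_zero_of_X_pow_dvd
      (hz.trans (((dvd_pow_self z k.succ_ne_zero).mul_left _).mul_right _))
  simpa [eulerSum, sum_range_succ', eulerTerm_zero] using (SModEq.sum hterm).add (SModEq.refl 1)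

theorem eulerSum_smodEq_qPochIoc {m n : ℕ} (h : m ≤ n) :
    eulerSum n (X ^ (m + 1)) ≡ qPochIoc m n [SMOD Ideal.span {(X : ℚ⟦X⟧) ^ (n + 1)}] := by
  induction h using Nat.decreasingInduction with
  | self => rw [qPochIoc_of_le le_rfl]; exact eulerSum_smodEq_one dvd_rfl
  | of_succ m hmn ih =>
    have hrem : X ^ (m + 1) * eulerTerm n (X ^ (m + 1 + 1))
        ≡ 0 [SMOD Ideal.span {(X : ℚ⟦X⟧) ^ (n + 1)}] := by
      have hn : X ^ n ∣ eulerTerm n (X ^ (m + 1 + 1)) :=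
        ((pow_dvd_pow_of_dvd (dvd_pow_self X (m + 1).succ_ne_zero) n).mul_left _).mul_right _
      refine smodEq_zero_of_X_pow_dvd ?_
      calc (X : ℚ⟦X⟧) ^ (n + 1) = X * X ^ n := pow_succ' X n
        _ ∣ _ := mul_dvd_mul (dvd_pow_self X m.succ_ne_zero) hn
    rw [eulerSum_eq_one_sub_mul_add, ← pow_succ, qPochIoc_eq_mul hmn]
    simpa using ((SModEq.refl (1 - X ^ (m + 1))).mul ih).add hrem

-- The truncation of `S(z) = ∑_{m ≥ 0} z^m (q^{m+1};q)_∞`.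
noncomputable def tailSum (n : ℕ) (z : ℚ⟦X⟧) : ℚ⟦X⟧ :=
  ∑ m ∈ range (n + 1), z ^ m * qPochIoc m n

theorem tailSum_mul_X (n : ℕ) (z : ℚ⟦X⟧) :
    tailSum n (z * X) = (1 - z) * tailSum n z + z ^ (n + 1) := by
  have hstep : ∀ m ∈ range n, (z * X) ^ (m + 1) * qPochIoc (m + 1) n
      = z ^ (m + 1) * qPochIoc (m + 1) n - z * (z ^ m * qPochIoc m n) := by
    intro m hm
    rw [qPochIoc_eq_mul (mem_range.1 hm)]
    ring
  have hfirst : tailSum n z = ∑ m ∈ range n, z ^ (m + 1) * qPochIoc (m + 1) n + qPochIoc 0 n := by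
    rw [tailSum, sum_range_succ', pow_zero, one_mul]
  have hlast : tailSum n z = ∑ m ∈ range n, z ^ m * qPochIoc m n + z ^ n := by
    rw [tailSum, sum_range_succ, qPochIoc_of_le le_rfl, mul_one]
  have hleft : tailSum n (z * X) = ∑ m ∈ range n, z ^ (m + 1) * qPochIoc (m + 1) n
      - z * ∑ m ∈ range n, z ^ m * qPochIoc m n + qPochIoc 0 n := by
    rw [tailSum, sum_range_succ', sum_congr rfl hstep, sum_sub_distrib, ← mul_sum, pow_zero,
      one_mul]
  linear_combination hleft - hfirst + z * hlast

theorem tailSum_X_pow_smodEq_qPoch (n k : ℕ) :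
    tailSum n (X ^ (k + 1)) ≡ qPoch k [SMOD Ideal.span {(X : ℚ⟦X⟧) ^ (n + 1)}] := by
  induction k with
  | zero =>
    have h := tailSum_mul_X n 1
    rw [one_mul, sub_self, zero_mul, zero_add, one_pow] at h
    rw [zero_add, pow_one, h, qPoch, prod_range_zero]
  | succ k ih =>
    have hrem : ((X : ℚ⟦X⟧) ^ (k + 1)) ^ (n + 1) ≡ 0 [SMOD Ideal.span {X ^ (n + 1)}] :=
      smodEq_zero_of_X_pow_dvd (pow_dvd_pow_of_dvd (dvd_pow_self X k.succ_ne_zero) _)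
    rw [pow_succ X (k + 1), tailSum_mul_X, qPoch_succ, mul_comm (qPoch k),
      ← add_zero ((1 - X ^ (k + 1)) * qPoch k)]
    exact ((SModEq.refl _).mul ih).add hrem

theorem sum_X_pow_mul_qPochIoc_sq_smodEq (n : ℕ) :
    ∑ m ∈ range (n + 1), X ^ m * qPochIoc m n ^ 2
      ≡ ∑ k ∈ range (n + 1), (-1) ^ k * X ^ (k + 1).choose 2
        [SMOD Ideal.span {(X : ℚ⟦X⟧) ^ (n + 1)}] := by
  have hswap : ∑ m ∈ range (n + 1), X ^ m * qPochIoc m n * eulerSum n (X ^ (m + 1))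
      = ∑ k ∈ range (n + 1), (-1) ^ k * X ^ (k + 1).choose 2 * (qPoch k)⁻¹
          * tailSum n (X ^ (k + 1)) := by
    simp only [eulerSum, tailSum, mul_sum]
    rw [sum_comm]
    refine sum_congr rfl fun k _ => sum_congr rfl fun m _ => ?_
    rw [eulerTerm, Nat.choose_succ_succ', Nat.choose_one_right]
    ring
  calc ∑ m ∈ range (n + 1), X ^ m * qPochIoc m n ^ 2
      ≡ ∑ m ∈ range (n + 1), X ^ m * qPochIoc m n * eulerSum n (X ^ (m + 1))
          [SMOD Ideal.span {(X : ℚ⟦X⟧) ^ (n + 1)}] := by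
        refine SModEq.sum fun m hm => ?_
        rw [sq, ← mul_assoc]
        exact (SModEq.refl _).mul
          (eulerSum_smodEq_qPochIoc (Nat.lt_succ_iff.1 (mem_range.1 hm))).symm
    _ = ∑ k ∈ range (n + 1), (-1) ^ k * X ^ (k + 1).choose 2 * (qPoch k)⁻¹
          * tailSum n (X ^ (k + 1)) := hswap
    _ ≡ ∑ k ∈ range (n + 1), (-1) ^ k * X ^ (k + 1).choose 2 * (qPoch k)⁻¹ * qPoch k
          [SMOD Ideal.span {(X : ℚ⟦X⟧) ^ (n + 1)}] :=
        SModEq.sum fun k _ => (SModEq.refl _).mul (tailSum_X_pow_smodEq_qPoch n k)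
    _ = ∑ k ∈ range (n + 1), (-1) ^ k * X ^ (k + 1).choose 2 := by
        simp only [mul_assoc, mul_comm (qPoch _)⁻¹, qPoch_mul_inv_cancel, mul_one]

theorem sum_range_X_pow_mul_qPochIoc_mul (n : ℕ) :
    ∑ k ∈ range n, X ^ (k + 1) * qPochIoc k n * qPochIoc (k + 1) n
      = 1 - ∑ m ∈ range (n + 1), X ^ m * qPochIoc m n ^ 2 := by
  have hterm : ∀ k ∈ range n, X ^ (k + 1) * qPochIoc k n * qPochIoc (k + 1) n
      = (qPochIoc (k + 1) n ^ 2 - qPochIoc k n ^ 2) - X ^ (k + 1) * qPochIoc (k + 1) n ^ 2 := by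
    intro k hk
    rw [qPochIoc_eq_mul (mem_range.1 hk)]
    ring
  rw [sum_congr rfl hterm, sum_sub_distrib, sum_range_sub (fun k => qPochIoc k n ^ 2),
    sum_range_succ', qPochIoc_of_le le_rfl]
  ring

theorem qPoch_sq_mul_summand_eq {k n : ℕ} (h : k < n) :
    qPoch n ^ 2 * (X ^ (k + 1) * ((qPoch k)⁻¹) ^ 2 * (1 - X ^ (k + 1))⁻¹)
      = X ^ (k + 1) * qPochIoc k n * qPochIoc (k + 1) n := by
  have hb : (1 - X ^ (k + 1) : ℚ⟦X⟧) * (1 - X ^ (k + 1))⁻¹ = 1 :=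
    PowerSeries.mul_inv_cancel _ (by simp [constantCoeff_one_sub_X_pow])
  rw [← qPoch_mul_qPochIoc h.le, qPochIoc_eq_mul h]
  linear_combination X ^ (k + 1) * qPochIoc (k + 1) n ^ 2 * (1 - X ^ (k + 1)) *
    ((qPoch k * (qPoch k)⁻¹ + 1) * (1 - X ^ (k + 1)) * (1 - X ^ (k + 1))⁻¹
      * qPoch_mul_inv_cancel k + hb)

theorem sum_range_neg_one_pow_X_pow_choose (n : ℕ) :
    ∑ k ∈ range (n + 1), (-1) ^ k * X ^ (k + 1).choose 2
      = 1 - ∑ k ∈ range n, (-1 : ℚ⟦X⟧) ^ k * X ^ ((k + 1) * (k + 2) / 2) := by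
  have hexp : ∀ k, (k + 2).choose 2 = (k + 1) * (k + 2) / 2 := fun k => by
    rw [Nat.choose_two_right, mul_comm]; rfl
  simp [sum_range_succ', hexp, pow_succ]
  ring

/-- `∑_{m ≥ 1} q^m/((q;q)_{m-1}²(1-q^m)) = ((q;q)_∞)⁻² ∑_{n ≥ 1} (-1)^{n-1} q^{n(n+1)/2}`,
the generating function identity for stacks (both sums over indices `≥ 1` are
reindexed by `m = k + 1`, `n = k + 1`). -/
theorem stacks_genFn :
    formalSum (fun k => X ^ (k + 1) * ((qPoch k)⁻¹) ^ 2 * (1 - X ^ (k + 1))⁻¹) =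
      (qPochInf⁻¹) ^ 2 *
        formalSum (fun k => (-1 : PowerSeries ℚ) ^ k * X ^ ((k + 1) * (k + 2) / 2)) := by
  set S := formalSum (fun k => X ^ (k + 1) * ((qPoch k)⁻¹) ^ 2 * (1 - X ^ (k + 1))⁻¹)
  set L := formalSum (fun k => (-1 : PowerSeries ℚ) ^ k * X ^ ((k + 1) * (k + 2) / 2))
  suffices key : qPochInf ^ 2 * S = L by
    rw [← key, ← mul_assoc, ← mul_pow,
      PowerSeries.inv_mul_cancel _ (by simp [constantCoeff_qPochInf]), one_pow, one_mul]
  have hL : ∀ k, X ^ (k + 1) ∣ (-1 : ℚ⟦X⟧) ^ k * X ^ ((k + 1) * (k + 2) / 2) := fun k => by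
    refine (pow_dvd_pow X ?_).mul_left _
    exact (Nat.le_div_iff_mul_le two_pos).2 (Nat.mul_le_mul_left _ (by omega))
  ext n
  refine smodEq_X_pow_iff.1 ?_ n n.lt_succ_self
  calc qPochInf ^ 2 * S
      ≡ qPoch n ^ 2 * ∑ k ∈ range n, X ^ (k + 1) * ((qPoch k)⁻¹) ^ 2 * (1 - X ^ (k + 1))⁻¹
        [SMOD Ideal.span {(X : ℚ⟦X⟧) ^ (n + 1)}] :=
      ((qPochInf_smodEq n).pow 2).mul
        (formalSum_smodEq_sum_range (fun k => (dvd_mul_right _ _).mul_right _) n)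
    _ = 1 - ∑ m ∈ range (n + 1), X ^ m * qPochIoc m n ^ 2 := by
      rw [mul_sum, sum_congr rfl fun k hk => qPoch_sq_mul_summand_eq (mem_range.1 hk),
        sum_range_X_pow_mul_qPochIoc_mul]
    _ ≡ 1 - ∑ k ∈ range (n + 1), (-1) ^ k * X ^ (k + 1).choose 2
        [SMOD Ideal.span {(X : ℚ⟦X⟧) ^ (n + 1)}] :=
      (SModEq.refl 1).sub (sum_X_pow_mul_qPochIoc_sq_smodEq n)
    _ = ∑ k ∈ range n, (-1) ^ k * X ^ ((k + 1) * (k + 2) / 2) := by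
      rw [sum_range_neg_one_pow_X_pow_choose, sub_sub_cancel]
    _ ≡ L [SMOD Ideal.span {(X : ℚ⟦X⟧) ^ (n + 1)}] := (formalSum_smodEq_sum_range hL n).symm
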